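/- arXiv:1705.01928 — 2 statements merged into one kernel-verified Lean document; each statement's English description precedes it below -/
import Mathlib

section
/- Let T : ℝ² → GL(2, ℝ) be differentiable (entrywise), and let φ̃₁, φ̃₂ be differentiable functions. Define φᵢ = Σⱼ Tʲᵢ·φ̃ⱼ ∘ ψ - ∂ᵢ(log |det T|), where ψ is the coordinate change with Jacobian T and the φ̃ⱼ are pulled back accordingly. Then the antisymmetric array ωᵢⱼ = ∂ⱼφᵢ - ∂ᵢφⱼ transforms tensorially: ωᵢⱼ = Σₚ Σ_q Tᵖᵢ·T^qⱼ·ω̃ₚ_q ∘ ψ, where ω̃ₚ_q = ∂̃_q φ̃ₚ - ∂̃ₚ φ̃_q, provided second partial derivatives of the coordinate change commute. -/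
open Matrix

/-- Partial derivative of a function on ℝ² (coordinates indexed by `Fin 2`). -/
noncomputable def pd (i : Fin 2) (f : (Fin 2 → ℝ) → ℝ) (p : Fin 2 → ℝ) : ℝ :=
  fderiv ℝ f p (Pi.single i 1)

/-- `pd i f` is differentiable when `f` is `C^∞` near every point. -/
lemma pd_differentiableAt {f : (Fin 2 → ℝ) → ℝ} (hf : ∀ q, ContDiffAt ℝ (⊤ : ℕ∞) f q)
    (i : Fin 2) (p : Fin 2 → ℝ) : DifferentiableAt ℝ (pd i f) p := by
  unfold pd
  exact (((hf p).fderiv_right (m := 1) (by exact WithTop.coe_le_coe.2 (le_top : ((1 + 1 : ℕ) : ℕ∞) ≤ ⊤))).differentiableAt one_ne_zero).clm_apply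
    (differentiableAt_const _)

/-- `pd i f` is `C^∞` when `f` is. -/
lemma pd_contDiff {f : (Fin 2 → ℝ) → ℝ} (hf : ContDiff ℝ (⊤ : ℕ∞) f) (i : Fin 2) :
    ContDiff ℝ (⊤ : ℕ∞) (pd i f) := by
  unfold pd
  exact (hf.fderiv_right (by exact_mod_cast le_top)).clm_apply contDiff_const

/-- Clairaut / Schwarz: second partial derivatives commute for `C^∞` functions. -/
lemma pd_comm {f : (Fin 2 → ℝ) → ℝ} (hf : ∀ q, ContDiffAt ℝ (⊤ : ℕ∞) f q)
    (i j : Fin 2) (p : Fin 2 → ℝ) : pd i (pd j f) p = pd j (pd i f) p := by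
  have hd : DifferentiableAt ℝ (fderiv ℝ f) p :=
    ((hf p).fderiv_right (m := 1) (by exact WithTop.coe_le_coe.2 (le_top : ((1 + 1 : ℕ) : ℕ∞) ≤ ⊤))).differentiableAt one_ne_zero
  have h : ∀ a b : Fin 2, pd a (pd b f) p
      = fderiv ℝ (fderiv ℝ f) p (Pi.single a 1) (Pi.single b 1) := by
    intro a b
    unfold pd
    rw [fderiv_clm_apply hd (differentiableAt_const _)]
    simp
  rw [h, h]
  exact (hf p).isSymmSndFDerivAt (by rw [minSmoothness_of_isRCLikeNormedField]; exact WithTop.coe_le_coe.2 (le_top : ((2 : ℕ) : ℕ∞) ≤ ⊤)) _ _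

lemma pd_sub {f g : (Fin 2 → ℝ) → ℝ} {p : Fin 2 → ℝ}
    (hf : DifferentiableAt ℝ f p) (hg : DifferentiableAt ℝ g p) (i : Fin 2) :
    pd i (fun q => f q - g q) p = pd i f p - pd i g p := by
  unfold pd; rw [fderiv_fun_sub hf hg]; simp

lemma pd_add {f g : (Fin 2 → ℝ) → ℝ} {p : Fin 2 → ℝ}
    (hf : DifferentiableAt ℝ f p) (hg : DifferentiableAt ℝ g p) (i : Fin 2) :
    pd i (fun q => f q + g q) p = pd i f p + pd i g p := by
  unfold pd; rw [fderiv_fun_add hf hg]; simp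

lemma pd_mul {f g : (Fin 2 → ℝ) → ℝ} {p : Fin 2 → ℝ}
    (hf : DifferentiableAt ℝ f p) (hg : DifferentiableAt ℝ g p) (i : Fin 2) :
    pd i (fun q => f q * g q) p = pd i f p * g p + f p * pd i g p := by
  unfold pd; rw [fderiv_fun_mul hf hg]; simp; ring

/-- Components of `fderiv` of a map into `Fin 2 → ℝ`. -/
lemma fderiv_proj (ψ : (Fin 2 → ℝ) → (Fin 2 → ℝ)) (hψ : ContDiff ℝ (⊤ : ℕ∞) ψ)
    (k : Fin 2) (p w : Fin 2 → ℝ) :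
    fderiv ℝ (fun x => ψ x k) p w = fderiv ℝ ψ p w k := by
  have : (fun x => ψ x k)
      = (ContinuousLinearMap.proj k (R := ℝ) (φ := fun _ : Fin 2 => ℝ)) ∘ ψ := rfl
  rw [this, fderiv_comp _ (ContinuousLinearMap.proj k).differentiableAt
    (hψ.differentiable (by simp) p), ContinuousLinearMap.fderiv]
  rfl

/-- Chain rule. -/
lemma pd_comp {g : (Fin 2 → ℝ) → ℝ} {ψ : (Fin 2 → ℝ) → (Fin 2 → ℝ)}
    (hg : ContDiff ℝ (⊤ : ℕ∞) g) (hψ : ContDiff ℝ (⊤ : ℕ∞) ψ) (j : Fin 2) (p : Fin 2 → ℝ) :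
    pd j (fun q => g (ψ q)) p =
      ∑ q', fderiv ℝ ψ p (Pi.single j 1) q' * pd q' g (ψ p) := by
  unfold pd
  rw [show (fun q => g (ψ q)) = g ∘ ψ from rfl,
    fderiv_comp _ (hg.differentiable (by simp) _) (hψ.differentiable (by simp) _)]
  set v := fderiv ℝ ψ p (Pi.single j 1) with hv
  have hvv : v = v 0 • (Pi.single 0 1 : Fin 2 → ℝ) + v 1 • (Pi.single 1 1 : Fin 2 → ℝ) := by
    funext x; fin_cases x <;> simp
  simp only [ContinuousLinearMap.coe_comp', Function.comp_apply, Fin.sum_univ_two]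
  rw [← hv, hvv]
  simp [mul_comm]

theorem stmt6
    (ψ : (Fin 2 → ℝ) → (Fin 2 → ℝ))
    (T : (Fin 2 → ℝ) → Matrix (Fin 2) (Fin 2) ℝ)
    (φt : Fin 2 → (Fin 2 → ℝ) → ℝ)
    (φ : Fin 2 → (Fin 2 → ℝ) → ℝ)
    (ω ωt : Fin 2 → Fin 2 → (Fin 2 → ℝ) → ℝ)
    (hψ : ContDiff ℝ (⊤ : ℕ∞) ψ)
    (hφt : ∀ j, ContDiff ℝ (⊤ : ℕ∞) (φt j))
    -- `T` is the Jacobian matrix of the coordinate change `ψ`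
    (hT : ∀ p i j, T p i j = pd j (fun q => ψ q i) p)
    (hdet : ∀ p, (T p).det ≠ 0)
    -- the non-tensorial transformation rule (4.11) for the φ's
    (hφ : ∀ i p, φ i p =
      (∑ j, T p j i * φt j (ψ p)) - pd i (fun q => Real.log |(T q).det|) p)
    (hω : ∀ i j p, ω i j p = pd j (φ i) p - pd i (φ j) p)
    (hωt : ∀ i j p, ωt i j p = pd j (φt i) p - pd i (φt j) p) :
    ∀ i j p, ω i j p = ∑ p', ∑ q, T p p' i * T p q j * ωt p' q (ψ p) := by
  intro i j p
  set L : (Fin 2 → ℝ) → ℝ := fun q => Real.log |(T q).det| with hLdef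
  -- smoothness of the components of ψ
  have hψk : ∀ k, ContDiff ℝ (⊤ : ℕ∞) fun q => ψ q k := fun k =>
    (ContinuousLinearMap.proj (R := ℝ) (φ := fun _ : Fin 2 => ℝ) k).contDiff.comp hψ
  -- the entries of T as functions
  have hTfun : ∀ k l, (fun q => T q k l) = pd l (fun x => ψ x k) := by
    intro k l; funext q; exact hT q k l
  have hTC : ∀ k l, ContDiff ℝ (⊤ : ℕ∞) fun q => T q k l := by
    intro k l; rw [hTfun k l]; exact pd_contDiff (hψk k) l
  -- smoothness of det T and of L = log |det T|
  have hdetfun : (fun q => (T q).det)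
      = fun q => T q 0 0 * T q 1 1 - T q 0 1 * T q 1 0 := by
    funext q; exact Matrix.det_fin_two _
  have hdetC : ContDiff ℝ (⊤ : ℕ∞) fun q => (T q).det := by
    rw [hdetfun]
    exact ((hTC 0 0).mul (hTC 1 1)).sub ((hTC 0 1).mul (hTC 1 0))
  have hLfun : L = fun q => Real.log ((T q).det) := by
    funext q; exact Real.log_abs _
  have hLCAt : ∀ q, ContDiffAt ℝ (⊤ : ℕ∞) L q := by
    intro q
    rw [hLfun]
    exact (Real.contDiffAt_log.2 (hdet q)).comp q hdetC.contDiffAt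
  -- smoothness of the pulled back φt's
  have hφtψ : ∀ k, ContDiff ℝ (⊤ : ℕ∞) fun q => φt k (ψ q) := fun k => (hφt k).comp hψ
  -- the chain rule, in terms of T
  have hchain : ∀ (k b : Fin 2),
      pd b (fun q => φt k (ψ q)) p = ∑ q', T p q' b * pd q' (φt k) (ψ p) := by
    intro k b
    rw [pd_comp (hφt k) hψ]
    refine Finset.sum_congr rfl fun q' _ => ?_
    congr 1
    rw [hT p q' b]
    unfold pd
    rw [fderiv_proj ψ hψ]
  -- the transformation rule, with the sum expanded
  have hφfun : ∀ l, φ l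
      = fun q => (T q 0 l * φt 0 (ψ q) + T q 1 l * φt 1 (ψ q)) - pd l L q := by
    intro l; funext q
    rw [hφ l q, Fin.sum_univ_two]
  -- differentiability side conditions
  have hdP : ∀ (k l : Fin 2), DifferentiableAt ℝ (fun q => T q k l * φt k (ψ q)) p :=
    fun k l => ((hTC k l).differentiable (by simp) p).mul ((hφtψ k).differentiable (by simp) p)
  have hdL : ∀ l : Fin 2, DifferentiableAt ℝ (pd l L) p :=
    fun l => pd_differentiableAt hLCAt l p
  -- the key computation of pd b (φ a)
  have key : ∀ a b : Fin 2, pd b (φ a) p =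
      ((pd b (fun q => T q 0 a) p * φt 0 (ψ p)
          + T p 0 a * ∑ q', T p q' b * pd q' (φt 0) (ψ p))
        + (pd b (fun q => T q 1 a) p * φt 1 (ψ p)
          + T p 1 a * ∑ q', T p q' b * pd q' (φt 1) (ψ p)))
      - pd b (pd a L) p := by
    intro a b
    rw [hφfun a]
    rw [pd_sub ((hdP 0 a).fun_add (hdP 1 a)) (hdL a) b]
    rw [pd_add (hdP 0 a) (hdP 1 a) b]
    rw [pd_mul ((hTC 0 a).differentiable (by simp) p) ((hφtψ 0).differentiable (by simp) p) b]
    rw [pd_mul ((hTC 1 a).differentiable (by simp) p) ((hφtψ 1).differentiable (by simp) p) b]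
    rw [hchain 0 b, hchain 1 b]
  -- symmetry of mixed partials of ψ (through T) and of L
  have hTsym : ∀ k : Fin 2, pd j (fun q => T q k i) p = pd i (fun q => T q k j) p := by
    intro k
    rw [hTfun k i, hTfun k j]
    exact pd_comm (fun q => (hψk k).contDiffAt) j i p
  have hLsym : pd j (pd i L) p = pd i (pd j L) p := pd_comm hLCAt j i p
  -- put everything together
  rw [hω i j p, key i j, key j i, hTsym 0, hTsym 1, hLsym]
  simp only [Fin.sum_univ_two, hωt]
  ring
end

section
/- Let A, B be differentiable functions on an open subset U of ℝ² with A never zero and B identically zero on U. Let ỹ : U → ℝ be differentiable with ∂_y ỹ never zero, and consider the coordinate change (x, y) ↦ (x, ỹ(x,y)). If the transformed components (Ã, B̃) are determined by the pseudocovector transformation rule of weight 1, i.e. (B̃, -Ã) = (det T)⁻²·T·(B, -A)ᵀ pointwise where T is the Jacobian matrix of the change with T₁₁ = 1, T₁₂ = 0, T₂₁ = ∂ₓỹ, T₂₂ = ∂_yỹ, then B̃ = 0 and Ã = A/(∂_y ỹ). In particular, choosing ỹ with ∂_y ỹ = A gives Ã = 1. -/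
open Matrix

noncomputable def pdx (f : ℝ × ℝ → ℝ) (p : ℝ × ℝ) : ℝ := fderiv ℝ f p (1, 0)

noncomputable def pdy (f : ℝ × ℝ → ℝ) (p : ℝ × ℝ) : ℝ := fderiv ℝ f p (0, 1)

/- The Jacobian of (x, y) ↦ (x, ỹ(x, y)) is the shear !![1, 0; ∂ₓỹ, ∂_yỹ] with determinant ∂_yỹ.
It maps (0, -A) to (0, -∂_yỹ A), and the weight factor (∂_yỹ)⁻² then leaves (0, -A / ∂_yỹ). -/

theorem det_inv_sq_smul_shear_mulVec {K : Type*} [Field K] (c d a : K) (hd : d ≠ 0) :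
    (!![1, 0; c, d].det)⁻¹ ^ 2 • (!![1, 0; c, d] *ᵥ ![0, -a]) = ![0, -(a / d)] := by
  ext i
  fin_cases i
  · simp
  · simp [det_fin_two_of]
    field_simp

theorem stmt9_general (U : Set (ℝ × ℝ))
    (A B At Bt yt : ℝ × ℝ → ℝ)
    (hA0 : ∀ p ∈ U, A p ≠ 0) (hB0 : ∀ p ∈ U, B p = 0)
    (hy0 : ∀ p ∈ U, pdy yt p ≠ 0)
    (T : ℝ × ℝ → Matrix (Fin 2) (Fin 2) ℝ)
    (hT : ∀ p, T p = !![1, 0; pdx yt p, pdy yt p])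
    -- the pseudocovector transformation rule of weight 1:
    (htrans : ∀ p ∈ U,
      (fun i => ![Bt p, -At p] i) =
        fun i => ((T p).det)⁻¹^2 * ((T p).mulVec ![B p, -A p]) i) :
    (∀ p ∈ U, Bt p = 0 ∧ At p = A p / pdy yt p) ∧
    ((∀ p ∈ U, pdy yt p = A p) → ∀ p ∈ U, At p = 1) := by
  have hnew : ∀ p ∈ U, Bt p = 0 ∧ At p = A p / pdy yt p := by
    intro p hp
    have hvec : ![Bt p, -At p] = ![0, -(A p / pdy yt p)] := by
      have h := htrans p hp
      rw [hT, hB0 p hp] at h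
      exact h.trans (det_inv_sq_smul_shear_mulVec _ _ _ (hy0 p hp))
    exact ⟨by simpa using congrFun hvec 0, by simpa using congrFun hvec 1⟩
  refine ⟨hnew, fun hyA p hp => ?_⟩
  rw [(hnew p hp).2, hyA p hp, div_self (hA0 p hp)]

theorem stmt9 (U : Set (ℝ × ℝ)) (hU : IsOpen U)
    (A B At Bt yt : ℝ × ℝ → ℝ)
    (hA : Differentiable ℝ A) (hB : Differentiable ℝ B) (hyt : Differentiable ℝ yt)
    (hA0 : ∀ p ∈ U, A p ≠ 0) (hB0 : ∀ p ∈ U, B p = 0)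
    (hy0 : ∀ p ∈ U, pdy yt p ≠ 0)
    (T : ℝ × ℝ → Matrix (Fin 2) (Fin 2) ℝ)
    (hT : ∀ p, T p = !![1, 0; pdx yt p, pdy yt p])
    -- the pseudocovector transformation rule of weight 1:
    (htrans : ∀ p ∈ U,
      (fun i => ![Bt p, -At p] i) =
        fun i => ((T p).det)⁻¹^2 * ((T p).mulVec ![B p, -A p]) i) :
    (∀ p ∈ U, Bt p = 0 ∧ At p = A p / pdy yt p) ∧
    ((∀ p ∈ U, pdy yt p = A p) → ∀ p ∈ U, At p = 1) :=
  stmt9_general U A B At Bt yt hA0 hB0 hy0 T hT htrans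
end
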